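/- arXiv:2208.01935 — 5 statements merged into one kernel-verified Lean document; each statement's English description precedes it below -/
import Mathlib

section
/- Let P, L, M be natural numbers with L ≥ P and M ≥ P, let c, z : Fin P → ℂ with z injective (the P nodes are pairwise distinct) and c(p) ≠ 0 for every p. Define the L×M complex matrix G by G(i,j) = Σ_{p < P} c(p)·z(p)^(i+j). Then the rank of G equals P. (This is the rank claim r(G_u(t)) = P used for the paper's matrix-pencil matrices when the pencil sizes exceed the number of paths.) -/
open Matrix

/-- **Rank of the matrix-pencil matrix** (`r(G_u(t)) = P`).
If `L ≥ P`, `M ≥ P`, the nodes `z p` are pairwise distinct and the amplitudes `c p`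
are nonzero, then the L×M matrix with entries `G i j = Σ_p c p * z p ^ (i+j)`
has rank exactly `P`. -/
theorem pencil_matrix_rank (P L M : ℕ) (hL : P ≤ L) (hM : P ≤ M) (c z : Fin P → ℂ)
    (hz : Function.Injective z) (hc : ∀ p, c p ≠ 0) :
    (Matrix.of fun (i : Fin L) (j : Fin M) =>
        ∑ p : Fin P, c p * z p ^ ((i : ℕ) + (j : ℕ))).rank = P := by
  set A : Matrix (Fin L) (Fin P) ℂ := Matrix.of fun i p => c p * z p ^ (i : ℕ) with hA
  set B : Matrix (Fin P) (Fin M) ℂ := Matrix.of fun p j => z p ^ (j : ℕ) with hB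
  set G : Matrix (Fin L) (Fin M) ℂ :=
    Matrix.of fun (i : Fin L) (j : Fin M) =>
      ∑ p : Fin P, c p * z p ^ ((i : ℕ) + (j : ℕ)) with hGdef
  have hG : G = A * B := by
    ext i j
    simp [hGdef, hA, hB, Matrix.mul_apply, pow_add, mul_assoc]
  set f : Fin P → Fin L := Fin.castLE hL with hf
  set g : Fin P → Fin M := Fin.castLE hM with hg
  set S : Matrix (Fin P) (Fin L) ℂ := (1 : Matrix (Fin L) (Fin L) ℂ).submatrix f id with hS
  set T : Matrix (Fin M) (Fin P) ℂ := (1 : Matrix (Fin M) (Fin M) ℂ).submatrix id g with hT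
  set A' : Matrix (Fin P) (Fin P) ℂ := (diagonal c * vandermonde z)ᵀ with hA'
  set B' : Matrix (Fin P) (Fin P) ℂ := vandermonde z with hB'
  have hSA : S * A = A' := by
    ext p q
    simp [hS, hA, hA', Matrix.mul_apply, Matrix.one_apply, hf, hB', vandermonde_apply, diagonal,
      Finset.sum_ite_eq, Fin.coe_castLE, mul_comm]
  have hBT : B * T = B' := by
    ext p q
    simp [hT, hB, hB', Matrix.mul_apply, Matrix.one_apply, hg, hB', vandermonde_apply,
      Finset.sum_ite_eq, Fin.coe_castLE]
  have hdetA' : A'.det ≠ 0 := by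
    rw [hA', Matrix.det_transpose, Matrix.det_mul, Matrix.det_diagonal]
    exact mul_ne_zero (Finset.prod_ne_zero_iff.mpr fun p _ => hc p)
      ((det_vandermonde_ne_zero_iff).mpr hz)
  have hdetB' : B'.det ≠ 0 := (det_vandermonde_ne_zero_iff).mpr hz
  have hunit : IsUnit (A' * B') := by
    rw [Matrix.isUnit_iff_isUnit_det, Matrix.det_mul]
    exact (isUnit_iff_ne_zero.mpr (mul_ne_zero hdetA' hdetB'))
  have hrank' : (A' * B').rank = P := by
    rw [Matrix.rank_of_isUnit _ hunit, Fintype.card_fin]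
  have hle : G.rank ≤ P := by
    calc G.rank = (A * B).rank := by rw [hG]
      _ ≤ A.rank := Matrix.rank_mul_le_left A B
      _ ≤ Fintype.card (Fin P) := Matrix.rank_le_card_width A
      _ = P := Fintype.card_fin P
  have hge : P ≤ G.rank := by
    have h1 : (A' * B').rank ≤ G.rank := by
      have : S * G * T = A' * B' := by
        rw [hG, ← hSA, ← hBT]; simp [Matrix.mul_assoc]
      calc (A' * B').rank = (S * G * T).rank := by rw [this]
        _ ≤ (S * G).rank := Matrix.rank_mul_le_left _ _
        _ ≤ G.rank := Matrix.rank_mul_le_right _ _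
    omega
  omega
end

section
/- Let P, L, M be natural numbers with L ≥ P + 1 and M ≥ P, let c, z : Fin P → ℂ with z injective and c(p) ≠ 0 for every p. Define the L×M complex matrix G by G(i,j) = Σ_{p < P} c(p)·z(p)^(i+j), and let G₁ (rows 0,…,L−2 of G) and G₂ (rows 1,…,L−1 of G) be the two (L−1)×M pencil submatrices, i.e., G₁(i,j) = G(i,j) and G₂(i,j) = G(i+1,j) for i < L−1. Then for every z₀ ∈ ℂ: if z₀ is not among the values z(p), the rank of G₂ − z₀·G₁ equals P; and if z₀ = z(q) for some q, the rank of G₂ − z₀·G₁ equals P − 1. In particular the parameters z(1),…,z(P) are exactly the complex numbers at which the pencil G₂ − z·G₁ drops rank. (Exact-recovery principle of the matrix pencil method used by the MDMP algorithm.) -/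
open Matrix

lemma pencil_aux (L' M K : ℕ) (hK : K ≤ L') (hKM : K ≤ M) (w d : Fin K → ℂ)
    (hw : Function.Injective w) (hd : ∀ k, d k ≠ 0)
    (H : Matrix (Fin L') (Fin M) ℂ)
    (hH : ∀ i j, H i j = ∑ k : Fin K, d k * w k ^ ((i : ℕ) + (j : ℕ))) :
    H.rank = K := by
  set A : Matrix (Fin L') (Fin K) ℂ := fun i k => w k ^ (i : ℕ) with hA
  set B : Matrix (Fin K) (Fin M) ℂ := fun k j => d k * w k ^ (j : ℕ) with hB
  have hAB : H = A * B := by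
    ext i j
    rw [hH, Matrix.mul_apply]
    refine Finset.sum_congr rfl fun k _ => ?_
    simp only [hA, hB]
    rw [pow_add]; ring
  have hupper : H.rank ≤ K := by
    rw [hAB]
    calc (A * B).rank ≤ B.rank := Matrix.rank_mul_le_right A B
      _ ≤ Fintype.card (Fin K) := Matrix.rank_le_card_height B
      _ = K := Fintype.card_fin K
  set r : Fin K → Fin L' := fun k => ⟨k, lt_of_lt_of_le k.isLt hK⟩ with hr
  set cm : Fin K → Fin M := fun k => ⟨k, lt_of_lt_of_le k.isLt hKM⟩ with hcm
  set X : Matrix (Fin K) (Fin L') ℂ := fun k i => if i = r k then 1 else 0 with hX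
  set Y : Matrix (Fin M) (Fin K) ℂ := fun j l => if j = cm l then 1 else 0 with hY
  have hS : ∀ k l, (X * H * Y) k l = H (r k) (cm l) := by
    intro k l
    rw [Matrix.mul_apply]
    have : ∀ j, (X * H) k j = H (r k) j := by
      intro j
      rw [Matrix.mul_apply]
      simp [hX]
    simp only [this, hY, mul_ite, mul_one, mul_zero]
    simp
  have hSfact : X * H * Y = (Matrix.vandermonde w)ᵀ * (Matrix.diagonal d * Matrix.vandermonde w) := by
    ext k l
    rw [hS, hH, Matrix.mul_apply]
    refine Finset.sum_congr rfl fun p _ => ?_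
    simp [Matrix.vandermonde, Matrix.mul_apply, Matrix.diagonal_apply, hr, hcm, pow_add]
    ring
  have hdet : IsUnit (X * H * Y).det := by
    rw [hSfact, Matrix.det_mul, Matrix.det_transpose, Matrix.det_mul, Matrix.det_diagonal]
    have hv : Matrix.det (Matrix.vandermonde w) ≠ 0 :=
      Matrix.det_vandermonde_ne_zero_iff.mpr hw
    exact (mul_ne_zero hv (mul_ne_zero (Finset.prod_ne_zero_iff.mpr fun k _ => hd k) hv)).isUnit
  have hlower : (K : ℕ) ≤ H.rank := by
    have h1 : (X * H * Y).rank = K := by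
      rw [Matrix.rank_of_isUnit _ ((Matrix.isUnit_iff_isUnit_det _).mpr hdet), Fintype.card_fin]
    calc K = (X * H * Y).rank := h1.symm
      _ ≤ (X * H).rank := Matrix.rank_mul_le_left _ _
      _ ≤ H.rank := Matrix.rank_mul_le_right _ _
  exact le_antisymm hupper hlower

/-- **Exact-recovery principle of the matrix pencil method.**
With `G i j = Σ_p c p * z p ^ (i+j)` (distinct nodes, nonzero amplitudes),
the pencil `G₂ - z₀ • G₁` (shifted/unshifted row submatrices) has rank `P`
when `z₀` is not one of the nodes, and rank `P - 1` when `z₀ = z q`. -/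
theorem pencil_rank_drop (P L M : ℕ) (hL : P + 1 ≤ L) (hM : P ≤ M) (c z : Fin P → ℂ)
    (hz : Function.Injective z) (hc : ∀ p, c p ≠ 0)
    (G : Matrix (Fin L) (Fin M) ℂ)
    (hG : ∀ i j, G i j = ∑ p : Fin P, c p * z p ^ ((i : ℕ) + (j : ℕ)))
    (G₁ G₂ : Matrix (Fin (L - 1)) (Fin M) ℂ)
    (hG₁ : ∀ (i : Fin (L - 1)) (j : Fin M),
      G₁ i j = G ⟨(i : ℕ), by have := i.isLt; omega⟩ j)
    (hG₂ : ∀ (i : Fin (L - 1)) (j : Fin M),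
      G₂ i j = G ⟨(i : ℕ) + 1, by have := i.isLt; omega⟩ j)
    (z₀ : ℂ) :
    (z₀ ∉ Set.range z → (G₂ - z₀ • G₁).rank = P) ∧
    (∀ q : Fin P, z₀ = z q → (G₂ - z₀ • G₁).rank = P - 1) := by
  have hpencil : ∀ (i : Fin (L - 1)) (j : Fin M),
      (G₂ - z₀ • G₁) i j = ∑ p : Fin P, (c p * (z p - z₀)) * z p ^ ((i : ℕ) + (j : ℕ)) := by
    intro i j
    have h1 := hG₁ i j
    have h2 := hG₂ i j
    rw [hG] at h1 h2
    simp only [Matrix.sub_apply, Matrix.smul_apply, smul_eq_mul, h1, h2]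
    rw [Finset.mul_sum, ← Finset.sum_sub_distrib]
    refine Finset.sum_congr rfl fun p _ => ?_
    have : (i : ℕ) + 1 + (j : ℕ) = ((i : ℕ) + (j : ℕ)) + 1 := by ring
    rw [this, pow_succ]
    ring
  constructor
  · intro hz₀
    refine pencil_aux (L - 1) M P (by omega) hM z (fun p => c p * (z p - z₀)) hz
      (fun p => mul_ne_zero (hc p) (sub_ne_zero.mpr fun h => hz₀ ⟨p, h⟩)) _ hpencil
  · rintro q rfl
    obtain ⟨P', rfl⟩ : ∃ P', P = P' + 1 := ⟨P - 1, by have := q.isLt; omega⟩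
    have hrank : (G₂ - z q • G₁).rank = P' := by
      refine pencil_aux (L - 1) M P' (by omega) (by omega)
        (fun k => z (q.succAbove k)) (fun k => c (q.succAbove k) * (z (q.succAbove k) - z q))
        (hz.comp (Fin.succAbove_right_injective)) (fun k =>
          mul_ne_zero (hc _) (sub_ne_zero.mpr fun h => Fin.succAbove_ne q k (hz h))) _ ?_
      intro i j
      rw [hpencil i j, Fin.sum_univ_succAbove _ q]
      simp
    omega
end

section
/- Let m, P, K be natural numbers with K ≥ 2, let E be an m×P complex matrix, ζ : Fin P → ℂ with Z = diag(ζ), and T an invertible P×P complex matrix. Define U, U₁, U₂ as the stacked matrices with blocks E·Z^k·T for k = 0,…,K−1, k = 0,…,K−2, and k = 1,…,K−1 respectively. If rank U₁ = P (U₁ has full column rank), then the P×P matrix U₁ᴴ·U₁ is invertible and (U₁ᴴ·U₁)⁻¹·U₁ᴴ·U₂ = T⁻¹ · Z · T, where ᴴ denotes the conjugate transpose. (This identifies the least-squares solution λ = U₁† U₂ of Eq. (88) with the similarity transform T⁻¹ Z T.) -/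
open Matrix

/-- **Least-squares solution of the shift-invariance relation** (Eq. (88)).
With `U₁`, `U₂` as the shifted stacked matrices of blocks `E * Z^k * T`
and `U₁` of full column rank, `U₁ᴴ·U₁` is invertible and the least-squares
solution `(U₁ᴴU₁)⁻¹U₁ᴴU₂` equals `T⁻¹ * Z * T`. -/
theorem pseudoinverse_shift_solution (m P K : ℕ) (hK : 2 ≤ K)
    (E : Matrix (Fin m) (Fin P) ℂ) (ζ : Fin P → ℂ)
    (T : Matrix (Fin P) (Fin P) ℂ) (hT : IsUnit T.det)
    (U₁ U₂ : Matrix (Fin (K - 1) × Fin m) (Fin P) ℂ)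
    (hU₁ : ∀ (k : Fin (K - 1)) (i : Fin m) (p : Fin P),
      U₁ (k, i) p = (E * (Matrix.diagonal ζ) ^ (k : ℕ) * T) i p)
    (hU₂ : ∀ (k : Fin (K - 1)) (i : Fin m) (p : Fin P),
      U₂ (k, i) p = (E * (Matrix.diagonal ζ) ^ ((k : ℕ) + 1) * T) i p)
    (hrank : U₁.rank = P) :
    IsUnit (U₁ᴴ * U₁) ∧
      (U₁ᴴ * U₁)⁻¹ * U₁ᴴ * U₂ = T⁻¹ * Matrix.diagonal ζ * T := by
  open scoped ComplexOrder in
  have h1 : (U₁ᴴ * U₁).rank = Fintype.card (Fin P) := by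
    rw [Matrix.rank_conjTranspose_mul_self, hrank, Fintype.card_fin]
  -- invertibility of U₁ᴴU₁
  have hsurj : Function.Surjective (U₁ᴴ * U₁).mulVecLin := by
    rw [← LinearMap.range_eq_top]
    apply Submodule.eq_top_of_finrank_eq
    rw [← Matrix.rank, h1]
    simp [Module.finrank_pi]
  have hinj : Function.Injective (U₁ᴴ * U₁).mulVecLin :=
    (LinearMap.injective_iff_surjective).mpr hsurj
  have hUnit : IsUnit (U₁ᴴ * U₁) := by
    rw [← Matrix.mulVec_injective_iff_isUnit]
    exact hinj
  refine ⟨hUnit, ?_⟩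
  -- the key algebraic identity: U₂ = U₁ * (T⁻¹ * Z * T)
  have hTT : T * T⁻¹ = 1 := Matrix.mul_nonsing_inv T hT
  have hkey : U₂ = U₁ * (T⁻¹ * Matrix.diagonal ζ * T) := by
    ext ⟨k, i⟩ p
    have hM : (E * (Matrix.diagonal ζ) ^ ((k : ℕ) + 1) * T)
        = (E * (Matrix.diagonal ζ) ^ (k : ℕ) * T) * (T⁻¹ * Matrix.diagonal ζ * T) := by
      rw [pow_succ]
      calc E * ((Matrix.diagonal ζ) ^ (k : ℕ) * Matrix.diagonal ζ) * T
          = E * (Matrix.diagonal ζ) ^ (k : ℕ) * (T * T⁻¹) * Matrix.diagonal ζ * T := by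
            rw [hTT]; simp [Matrix.mul_assoc]
        _ = (E * (Matrix.diagonal ζ) ^ (k : ℕ) * T) * (T⁻¹ * Matrix.diagonal ζ * T) := by
            simp only [Matrix.mul_assoc]
    calc U₂ (k, i) p = (E * (Matrix.diagonal ζ) ^ ((k : ℕ) + 1) * T) i p := hU₂ k i p
      _ = ((E * (Matrix.diagonal ζ) ^ (k : ℕ) * T) * (T⁻¹ * Matrix.diagonal ζ * T)) i p := by
          rw [hM]
      _ = ∑ q, U₁ (k, i) q * (T⁻¹ * Matrix.diagonal ζ * T) q p := by
          rw [Matrix.mul_apply]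
          exact Finset.sum_congr rfl fun q _ => by rw [hU₁]
      _ = (U₁ * (T⁻¹ * Matrix.diagonal ζ * T)) (k, i) p := (Matrix.mul_apply).symm
  rw [hkey, Matrix.mul_assoc ((U₁ᴴ * U₁)⁻¹), ← Matrix.mul_assoc U₁ᴴ,
    ← Matrix.mul_assoc, Matrix.nonsing_inv_mul _ (Matrix.isUnit_iff_isUnit_det _ |>.mp hUnit),
    Matrix.one_mul]
end

section
/- Let m, n be natural numbers and let M be an m×n complex matrix that is centro-Hermitian, i.e., J_m · conj(M) · J_n = M. Then every entry of Q_mᴴ · M · Q_n is real (has zero imaginary part), where Q_m and Q_n are the unitary transformation matrices defined blockwise by Q_{2k} = (1/√2)·[[I_k, i·I_k],[J_k, −i·J_k]] for even size and Q_{2k+1} = (1/√2)·[[I_k, 0, i·I_k],[0, √2, 0],[J_k, 0, −i·J_k]] for odd size. (This is the real-valued transformation property of the unitary matrix pencil method used throughout Sections III-A and III-B.) -/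
open Matrix

/-- The k×k anti-identity (exchange) matrix over ℂ: entry 1 iff `a + b = k - 1`. -/
def Jmat (k : ℕ) : Matrix (Fin k) (Fin k) ℂ :=
  Matrix.of fun a b => if (a : ℕ) + (b : ℕ) = k - 1 then 1 else 0

/-- The even-size unitary transformation matrix of Eq. (51):
`Q_{2k} = (1/√2) · [[I_k, i·I_k], [J_k, −i·J_k]]`. -/
noncomputable def Qeven (k : ℕ) : Matrix (Fin (2 * k)) (Fin (2 * k)) ℂ :=
  ((Real.sqrt 2 : ℂ))⁻¹ •
    (Matrix.reindex (finSumFinEquiv.trans (finCongr (two_mul k).symm))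
      (finSumFinEquiv.trans (finCongr (two_mul k).symm))
      (Matrix.fromBlocks (1 : Matrix (Fin k) (Fin k) ℂ)
        (Complex.I • (1 : Matrix (Fin k) (Fin k) ℂ))
        (Jmat k) ((-Complex.I) • Jmat k)))

/-- Index identification for the 3×3 block structure of the odd-size matrix. -/
def oddIndexEquiv (k : ℕ) : (Fin k ⊕ (Fin 1 ⊕ Fin k)) ≃ Fin (2 * k + 1) :=
  ((Equiv.refl (Fin k)).sumCongr finSumFinEquiv).trans
    (finSumFinEquiv.trans (finCongr (by omega)))

/-- The odd-size unitary transformation matrix of Eq. (52):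
`Q_{2k+1} = (1/√2) · [[I_k, 0, i·I_k], [0, √2, 0], [J_k, 0, −i·J_k]]`. -/
noncomputable def Qodd (k : ℕ) : Matrix (Fin (2 * k + 1)) (Fin (2 * k + 1)) ℂ :=
  ((Real.sqrt 2 : ℂ))⁻¹ •
    (Matrix.reindex (oddIndexEquiv k) (oddIndexEquiv k)
      (Matrix.fromBlocks (1 : Matrix (Fin k) (Fin k) ℂ)
        (Matrix.fromCols (0 : Matrix (Fin k) (Fin 1) ℂ)
          (Complex.I • (1 : Matrix (Fin k) (Fin k) ℂ)))
        (Matrix.fromRows (0 : Matrix (Fin 1) (Fin k) ℂ) (Jmat k))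
        (Matrix.fromBlocks ((Real.sqrt 2 : ℂ) • (1 : Matrix (Fin 1) (Fin 1) ℂ)) 0 0
          ((-Complex.I) • Jmat k))))

/-- The size-s unitary transformation matrix `Q_s` of the unitary matrix pencil
method, defined as `Qeven (s/2)` for even `s` and `Qodd (s/2)` for odd `s`. -/
noncomputable def Qmat (s : ℕ) : Matrix (Fin s) (Fin s) ℂ :=
  if h : s % 2 = 0 then
    Matrix.reindex (finCongr (by omega : 2 * (s / 2) = s))
      (finCongr (by omega : 2 * (s / 2) = s)) (Qeven (s / 2))
  else
    Matrix.reindex (finCongr (by omega : 2 * (s / 2) + 1 = s))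
      (finCongr (by omega : 2 * (s / 2) + 1 = s)) (Qodd (s / 2))

/-! Conjugating `Q_s` reverses its rows: `conj Q_s = J_s Q_s`. For the block form this holds
because reversing `Fin (2k)` (or `Fin (2k+1)`) swaps the outer blocks and reverses each of them,
which exchanges `I_k ↔ J_k` and `i ↔ -i`. Hence
`conj (Q_mᴴ M Q_n) = Q_mᴴ J_m conj(M) J_n Q_n = Q_mᴴ M Q_n`. -/

lemma Jmat_eq_submatrix_one (k : ℕ) :
    Jmat k = (1 : Matrix (Fin k) (Fin k) ℂ).submatrix Fin.rev id := by
  ext a b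
  simp only [Jmat, of_apply, submatrix_apply, id, one_apply, Fin.ext_iff, Fin.val_rev]
  congr 1
  exact propext (by omega)

lemma Jmat_mul {k : ℕ} {n : Type*} (A : Matrix (Fin k) n ℂ) :
    Jmat k * A = A.submatrix Fin.rev id := by
  rw [Jmat_eq_submatrix_one]
  exact one_submatrix_mul Fin.rev (Equiv.refl _) A

lemma Jmat_conjTranspose (k : ℕ) : (Jmat k)ᴴ = Jmat k := by
  ext a b
  simp only [Jmat, conjTranspose_apply, of_apply, add_comm (b : ℕ)]
  split_ifs <;> simp

lemma map_conj_smul_eq_mul_smul {m n : Type*} [Fintype m] {J : Matrix m m ℂ}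
    {A : Matrix m n ℂ} {c : ℂ}
    (hc : starRingEnd ℂ c = c) (hA : A.map (starRingEnd ℂ) = J * A) :
    (c • A).map (starRingEnd ℂ) = J * (c • A) := by
  rw [Matrix.mul_smul, ← hA]
  ext
  simp [hc]

lemma map_conj_reindex_eq_Jmat_mul {s : ℕ} {ι κ ν : Type*} (e : ι ≃ Fin s) (f : κ ≃ ν)
    (σ : ι → ι) (he : ∀ x, (e x).rev = e (σ x)) (B : Matrix ι κ ℂ)
    (hB : B.map (starRingEnd ℂ) = B.submatrix σ id) :
    (reindex e f B).map (starRingEnd ℂ) = Jmat s * reindex e f B := by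
  rw [Jmat_mul]
  ext a b
  obtain ⟨x, rfl⟩ := e.surjective a
  simpa [he] using congrFun (congrFun hB x) (f.symm b)

lemma Qeven_map_conj (k : ℕ) : (Qeven k).map (starRingEnd ℂ) = Jmat (2 * k) * Qeven k := by
  refine map_conj_smul_eq_mul_smul (by simp) (map_conj_reindex_eq_Jmat_mul _ _
    (Sum.elim (Sum.inr ∘ Fin.rev) (Sum.inl ∘ Fin.rev)) ?_ _ ?_)
  · rintro (i | i) <;> ext <;> simp <;> omega
  · ext (i | i) (j | j) <;> simp [Jmat_eq_submatrix_one, one_apply] <;> split_ifs <;> simp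

lemma Qodd_map_conj (k : ℕ) : (Qodd k).map (starRingEnd ℂ) = Jmat (2 * k + 1) * Qodd k := by
  refine map_conj_smul_eq_mul_smul (by simp) (map_conj_reindex_eq_Jmat_mul _ _
    (Sum.elim (Sum.inr ∘ Sum.inr ∘ Fin.rev) (Sum.elim (Sum.inr ∘ Sum.inl) (Sum.inl ∘ Fin.rev)))
    ?_ _ ?_)
  · rintro (i | i | i) <;> ext <;> simp [oddIndexEquiv] <;> omega
  · ext (i | i | i) (j | j | j) <;> simp [Jmat_eq_submatrix_one, one_apply] <;> split_ifs <;> simp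

lemma Qmat_map_conj (s : ℕ) : (Qmat s).map (starRingEnd ℂ) = Jmat s * Qmat s := by
  have he {a b : ℕ} (h : a = b) (x : Fin a) : (finCongr h x).rev = finCongr h x.rev :=
    (Fin.cast_rev x h).symm
  unfold Qmat
  split_ifs
  · exact map_conj_reindex_eq_Jmat_mul _ _ _ (he _) _ (by rw [Qeven_map_conj, Jmat_mul])
  · exact map_conj_reindex_eq_Jmat_mul _ _ _ (he _) _ (by rw [Qodd_map_conj, Jmat_mul])

lemma map_conj_conjTranspose_mul_mul_eq_self {l m n o : Type*} [Fintype m] [Fintype n]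
    {P : Matrix m l ℂ} {Q : Matrix n o ℂ} {JP : Matrix m m ℂ} {JQ : Matrix n n ℂ}
    {M : Matrix m n ℂ} (hJP : JPᴴ = JP) (hP : P.map (starRingEnd ℂ) = JP * P)
    (hQ : Q.map (starRingEnd ℂ) = JQ * Q) (hM : JP * M.map (starRingEnd ℂ) * JQ = M) :
    (Pᴴ * M * Q).map (starRingEnd ℂ) = Pᴴ * M * Q := by
  have hPH : Pᴴ.map (starRingEnd ℂ) = Pᴴ * JP := by
    rw [conjTranspose_map _ (fun _ => by simp), hP, conjTranspose_mul, hJP]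
  calc (Pᴴ * M * Q).map (starRingEnd ℂ)
      = Pᴴ.map (starRingEnd ℂ) * M.map (starRingEnd ℂ) * Q.map (starRingEnd ℂ) := by
        rw [Matrix.map_mul, Matrix.map_mul]
    _ = Pᴴ * (JP * M.map (starRingEnd ℂ) * JQ) * Q := by
        rw [hPH, hQ]
        simp only [Matrix.mul_assoc]
    _ = Pᴴ * M * Q := by rw [hM]

/-- **Real-valued transformation of centro-Hermitian matrices**
(unitary matrix pencil method, Sections III-A, III-B): if
`J_m · conj(M) · J_n = M` then every entry of `Q_mᴴ · M · Q_n` is real. -/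
theorem centroHermitian_transform_real (m n : ℕ) (M : Matrix (Fin m) (Fin n) ℂ)
    (hM : Jmat m * M.map (starRingEnd ℂ) * Jmat n = M) :
    ∀ (a : Fin m) (b : Fin n), (((Qmat m)ᴴ * M * Qmat n) a b).im = 0 := by
  intro a b
  have hreal := map_conj_conjTranspose_mul_mul_eq_self (Jmat_conjTranspose m) (Qmat_map_conj m)
    (Qmat_map_conj n) hM
  rw [← Complex.conj_eq_iff_im]
  exact congrFun (congrFun hreal a) b
end

section
/- Let 𝒩 > 0, 𝒬 > 0 and N_v be real numbers with 𝒩 ≠ 𝒬 and N_v + 1 > 0. Define F(L, R, λ) = 𝒩/(N_v − R + 1) + L − 1 + λ·(L·R − 𝒬) for real L, R, λ with R ≠ N_v + 1. Then a point (L, R, λ) with R ≠ N_v + 1 satisfies ∂F/∂L = ∂F/∂R = ∂F/∂λ = 0 if and only if it equals one of the two points: (L₁, R₁, −1/R₁) with R₁ = √𝒬·(N_v + 1)/(√𝒩 + √𝒬) and L₁ = √𝒬·(√𝒩 + √𝒬)/(N_v + 1); or (L₂, R₂, −1/R₂) with R₂ = √𝒬·(N_v + 1)/(√𝒬 − √𝒩)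 and L₂ = √𝒬·(√𝒬 − √𝒩)/(N_v + 1). (This is the stationary-point computation of the Lagrange function in the proof of Proposition 1, Eqs. (78)–(80), identifying the extreme points of the pencil-size constraint.) -/
/-!
The partial derivatives are `1 + λR`, `𝒩/(N_v + 1 − R)² + λL` and `LR − 𝒬`. The first and third
give `λ = −1/R` and `L = 𝒬/R`, which turn the second into `𝒩R² = 𝒬(N_v + 1 − R)²`. Taking square
roots, `√𝒩 R = ±√𝒬 (N_v + 1 − R)`: two linear equations in `R`, one for each stationary point.
-/

noncomputable def lagrangian (𝒩 𝒬 Nv L R lam : ℝ) : ℝ :=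
  𝒩 / (Nv - R + 1) + L - 1 + lam * (L * R - 𝒬)

section Derivatives

variable {𝒩 𝒬 Nv L R lam : ℝ}

theorem hasDerivAt_lagrangian_fst :
    HasDerivAt (fun L' => lagrangian 𝒩 𝒬 Nv L' R lam) (1 + lam * R) L := by
  have h := (((hasDerivAt_id L).const_add (𝒩 / (Nv - R + 1))).sub_const 1).add
    ((((hasDerivAt_id L).mul_const R).sub_const 𝒬).const_mul lam)
  exact h.congr_deriv (by simp)

theorem hasDerivAt_lagrangian_snd (hR : Nv + 1 - R ≠ 0) :
    HasDerivAt (fun R' => lagrangian 𝒩 𝒬 Nv L R' lam) (𝒩 / (Nv + 1 - R) ^ 2 + lam * L) R := by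
  have hden : HasDerivAt (fun R' : ℝ => Nv - R' + 1) (-1) R := by
    simpa using ((hasDerivAt_id R).const_sub Nv).add_const 1
  have h := ((((hasDerivAt_const R 𝒩).div hden (by rwa [sub_add_eq_add_sub])).add_const L
    ).sub_const 1).add ((((hasDerivAt_id R).const_mul L).sub_const 𝒬).const_mul lam)
  exact h.congr_deriv (by rw [sub_add_eq_add_sub]; ring)

theorem hasDerivAt_lagrangian_thd :
    HasDerivAt (fun lam' => lagrangian 𝒩 𝒬 Nv L R lam') (L * R - 𝒬) lam :=
  (((hasDerivAt_id lam).mul_const (L * R - 𝒬)).const_add (𝒩 / (Nv - R + 1) + L - 1)).congr_deriv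
    (one_mul _)

end Derivatives

section Algebra

variable {a b c L R lam : ℝ}

theorem lagrange_system_iff (hR : c - R ≠ 0) :
    (1 + lam * R = 0 ∧ a ^ 2 / (c - R) ^ 2 + lam * L = 0 ∧ L * R - b ^ 2 = 0) ↔
      R ≠ 0 ∧ lam = -1 / R ∧ L = b ^ 2 / R ∧ (a * R) ^ 2 = (b * (c - R)) ^ 2 := by
  constructor
  · rintro ⟨h₁, h₂, h₃⟩
    have hR0 : R ≠ 0 := by rintro rfl; simp at h₁
    have hlam : lam = -1 / R := by rw [eq_div_iff hR0]; linarith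
    have hL : L = b ^ 2 / R := by rw [eq_div_iff hR0]; linarith
    refine ⟨hR0, hlam, hL, ?_⟩
    rw [hlam, hL] at h₂
    field_simp at h₂
    linear_combination h₂
  · rintro ⟨hR0, rfl, rfl, h⟩
    refine ⟨by field_simp; ring, ?_, by field_simp; ring⟩
    field_simp
    linear_combination h

theorem mul_eq_mul_sub_or_neg_iff (hapb : a + b ≠ 0) (hbma : b - a ≠ 0) :
    (a * R = b * (c - R) ∨ a * R = -(b * (c - R))) ↔
      R = b * c / (a + b) ∨ R = b * c / (b - a) := by
  rw [eq_div_iff hapb, eq_div_iff hbma]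
  constructor <;> rintro (h | h) <;> [left; right; left; right] <;> linarith

theorem stationary_triple_eq_iff {s : ℝ} (hb : b ≠ 0) (hc : c ≠ 0) (hs : s ≠ 0) :
    (L, R, lam) = (b * s / c, b * c / s, -1 / (b * c / s)) ↔
      R = b * c / s ∧ lam = -1 / R ∧ L = b ^ 2 / R := by
  simp only [Prod.mk.injEq]
  constructor
  · rintro ⟨rfl, rfl, rfl⟩
    refine ⟨rfl, rfl, ?_⟩
    field_simp
  · rintro ⟨rfl, rfl, rfl⟩
    refine ⟨?_, rfl, rfl⟩
    field_simp

theorem lagrange_system_iff_eq_or_eq (ha : 0 < a) (hb : 0 < b) (hab : a ≠ b) (hc : c ≠ 0)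
    (hR : c - R ≠ 0) :
    (1 + lam * R = 0 ∧ a ^ 2 / (c - R) ^ 2 + lam * L = 0 ∧ L * R - b ^ 2 = 0) ↔
      (L, R, lam) = (b * (a + b) / c, b * c / (a + b), -1 / (b * c / (a + b))) ∨
        (L, R, lam) = (b * (b - a) / c, b * c / (b - a), -1 / (b * c / (b - a))) := by
  have hapb : a + b ≠ 0 := by positivity
  have hbma : b - a ≠ 0 := sub_ne_zero.mpr hab.symm
  rw [lagrange_system_iff hR, sq_eq_sq_iff_eq_or_eq_neg, mul_eq_mul_sub_or_neg_iff hapb hbma,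
    stationary_triple_eq_iff hb.ne' hc hapb, stationary_triple_eq_iff hb.ne' hc hbma]
  constructor
  · rintro ⟨-, hlam, hL, hR₁ | hR₂⟩
    exacts [.inl ⟨hR₁, hlam, hL⟩, .inr ⟨hR₂, hlam, hL⟩]
  · rintro (⟨rfl, hlam, hL⟩ | ⟨rfl, hlam, hL⟩)
    exacts [⟨by positivity, hlam, hL, .inl rfl⟩,
      ⟨div_ne_zero (by positivity) hbma, hlam, hL, .inr rfl⟩]

end Algebra

/-- **Stationary points of the Lagrange function** (proof of Proposition 1,
Eqs. (78)–(80)). For `F(L,R,λ) = 𝒩/(N_v − R + 1) + L − 1 + λ(LR − 𝒬)` with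
`𝒩, 𝒬 > 0`, `𝒩 ≠ 𝒬`, `N_v + 1 > 0`, a point with `R ≠ N_v + 1` has all three
partial derivatives zero iff it is one of the two explicit points. -/
theorem lagrange_stationary_points (𝒩 𝒬 Nv : ℝ) (h𝒩 : 0 < 𝒩) (h𝒬 : 0 < 𝒬)
    (hne : 𝒩 ≠ 𝒬) (hNv : 0 < Nv + 1)
    (F : ℝ → ℝ → ℝ → ℝ)
    (hF : ∀ L R lam, F L R lam = 𝒩 / (Nv - R + 1) + L - 1 + lam * (L * R - 𝒬))
    (L R lam : ℝ) (hR : R ≠ Nv + 1) :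
    (deriv (fun L' => F L' R lam) L = 0 ∧
        deriv (fun R' => F L R' lam) R = 0 ∧
        deriv (fun l => F L R l) lam = 0) ↔
      ((L, R, lam) =
          (Real.sqrt 𝒬 * (Real.sqrt 𝒩 + Real.sqrt 𝒬) / (Nv + 1),
           Real.sqrt 𝒬 * (Nv + 1) / (Real.sqrt 𝒩 + Real.sqrt 𝒬),
           -1 / (Real.sqrt 𝒬 * (Nv + 1) / (Real.sqrt 𝒩 + Real.sqrt 𝒬))) ∨
        (L, R, lam) =
          (Real.sqrt 𝒬 * (Real.sqrt 𝒬 - Real.sqrt 𝒩) / (Nv + 1),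
           Real.sqrt 𝒬 * (Nv + 1) / (Real.sqrt 𝒬 - Real.sqrt 𝒩),
           -1 / (Real.sqrt 𝒬 * (Nv + 1) / (Real.sqrt 𝒬 - Real.sqrt 𝒩)))) := by
  obtain rfl : F = lagrangian 𝒩 𝒬 Nv := funext fun L => funext fun R => funext (hF L R)
  have hden : Nv + 1 - R ≠ 0 := sub_ne_zero.mpr hR.symm
  rw [hasDerivAt_lagrangian_fst.deriv, (hasDerivAt_lagrangian_snd hden).deriv,
    hasDerivAt_lagrangian_thd.deriv]
  have hsqrt : Real.sqrt 𝒩 ≠ Real.sqrt 𝒬 := by rwa [Ne, Real.sqrt_inj h𝒩.le h𝒬.le]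
  have key := lagrange_system_iff_eq_or_eq (L := L) (lam := lam) (Real.sqrt_pos.2 h𝒩)
    (Real.sqrt_pos.2 h𝒬) hsqrt hNv.ne' hden
  rwa [Real.sq_sqrt h𝒩.le, Real.sq_sqrt h𝒬.le] at key
end
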